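/- Let n ≥ 2 and let M ∈ ℝ^{n×n} be Metzler, invertible, and output unstable, i.e., the leading principal (n−1)×(n−1) submatrix M₁₁ of M is Hurwitz stable and M_{nn} > 0. Then: (a) the last column and last row of M⁻¹ are nonnegative off the diagonal entry, i.e., (M⁻¹)_{in} ≥ 0 and (M⁻¹)_{ni} ≥ 0 for all i < n, and (M⁻¹)_{nn} > 0; and (b) for every b₀ ∈ ℝⁿ with b₀ ≥ 0 entrywise, g₀ := −eₙᵀM⁻¹b₀ ≤ 0 and g_n := −eₙᵀM⁻¹eₙ < 0. -/

import Mathlib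

open Matrix

/-- A real square matrix is Metzler if all its off-diagonal entries are nonnegative. -/
def Metzler {m : Type*} [Fintype m] (M : Matrix m m ℝ) : Prop :=
  ∀ i j, i ≠ j → 0 ≤ M i j

/-- A real square matrix is Hurwitz stable if all its (complex) eigenvalues have
negative real part. -/
def HurwitzStable {m : Type*} [Fintype m] [DecidableEq m] (M : Matrix m m ℝ) : Prop :=
  ∀ z ∈ spectrum ℂ (M.map Complex.ofReal), z.re < 0

/-!
Write `M = [[A, b], [c, d]]` with `A` the leading block. Since `A` is Metzler, `C = 1 + α⁻¹ A`
is entrywise nonnegative for large `α > 0`, and since `A` is Hurwitz its spectrum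
`{1 + z / α | z ∈ σ(A)}` lies in the open unit disc for large `α`. Gelfand's formula gives
`Cᵏ → 0`, so `(1 - C)⁻¹ = ∑ Cᵏ ≥ 0`, i.e. `A⁻¹ = -α⁻¹ (1 - C)⁻¹ ≤ 0`.

The last column `(y, t)` of `M⁻¹` solves `A y + t b = 0` and `c ⬝ y + t d = 1`, so
`y = -t A⁻¹ b` and `t (d - c A⁻¹ b) = 1`. As `b, c ≥ 0` and `A⁻¹ ≤ 0`, the Schur
complement `d - c A⁻¹ b` is at least `d > 0`; hence `t > 0` and `y ≥ 0`. The last row is the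
last column of `(Mᵀ)⁻¹`.
-/

open Filter Topology

theorem tendsto_pow_atTop_nhds_zero_of_spectralRadius_lt_one {A : Type*} [NormedRing A]
    [NormedAlgebra ℂ A] [CompleteSpace A] {a : A} (h : spectralRadius ℂ a < 1) :
    Tendsto (a ^ ·) atTop (𝓝 0) := by
  obtain ⟨t, hρt, ht1⟩ := ENNReal.lt_iff_exists_nnreal_btwn.1 h
  refine squeeze_zero_norm' ?_
    (tendsto_pow_atTop_nhds_zero_of_lt_one t.coe_nonneg (by exact_mod_cast ht1))
  have hgelfand := spectrum.pow_nnnorm_pow_one_div_tendsto_nhds_spectralRadius a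
  filter_upwards [hgelfand.eventually_lt_const hρt, eventually_gt_atTop 0] with k hk hk0
  rw [one_div, ← ENNReal.coe_rpow_of_nonneg _ (by positivity), ENNReal.coe_lt_coe,
    NNReal.rpow_inv_lt_iff (by positivity), NNReal.rpow_natCast] at hk
  exact_mod_cast hk.le

theorem spectrum.exists_eq_one_add_mul_of_mem_one_add_smul {B : Type*} [Ring B] [Algebra ℂ B]
    {a : B} {c : ℂ} (hc : c ≠ 0) {μ : ℂ} (hμ : μ ∈ spectrum ℂ (1 + c • a)) :
    ∃ z ∈ spectrum ℂ a, μ = 1 + c * z := by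
  rw [← map_one (algebraMap ℂ B), ← Units.smul_mk0 hc, ← spectrum.singleton_add_eq,
    spectrum.unit_smul_eq_smul, Set.singleton_add] at hμ
  obtain ⟨_, ⟨z, hz, rfl⟩, rfl⟩ := hμ
  exact ⟨z, hz, rfl⟩

theorem Complex.eventually_norm_ofReal_add_lt {z : ℂ} (hz : z.re < 0) :
    ∀ᶠ α : ℝ in atTop, ‖(α : ℂ) + z‖ < α := by
  filter_upwards [eventually_gt_atTop (normSq z / (-2 * z.re)), eventually_gt_atTop 0]
    with α hα hα0
  -- `‖α + z‖² = α² + 2 α z.re + ‖z‖²`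
  rw [← sq_lt_sq₀ (norm_nonneg _) hα0.le, Complex.sq_norm, Complex.normSq_apply]
  rw [div_lt_iff₀ (by linarith), Complex.normSq_apply] at hα
  simp only [add_re, ofReal_re, add_im, ofReal_im, zero_add]
  nlinarith

namespace Matrix

variable {m : Type*} [Fintype m] [DecidableEq m]

section

attribute [local instance] Matrix.linftyOpNormedAddCommGroup Matrix.linftyOpNormedRing
  Matrix.linftyOpNormedAlgebra

theorem tendsto_pow_atTop_nhds_zero_of_norm_spectrum_lt_one {C : Matrix m m ℝ}
    (h : ∀ μ ∈ spectrum ℂ (C.map Complex.ofReal), ‖μ‖ < 1) :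
    Tendsto (C ^ ·) atTop (𝓝 0) := by
  cases isEmpty_or_nonempty m
  · exact tendsto_const_nhds.congr fun _ => Subsingleton.elim _ _
  have hC' := tendsto_pow_atTop_nhds_zero_of_spectralRadius_lt_one
    (spectrum.spectralRadius_lt_of_forall_lt (C.map Complex.ofReal) (r := 1)
      fun μ hμ => by exact_mod_cast h μ hμ)
  have hre := ((continuous_id.matrix_map Complex.continuous_re).tendsto 0).comp hC'
  have hpow (k : ℕ) : C.map Complex.ofReal ^ k = (C ^ k).map Complex.ofReal :=
    (C.map_pow Complex.ofRealHom k).symm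
  simpa [Function.comp_def, hpow] using hre
end

theorem inv_one_sub_apply_nonneg {C : Matrix m m ℝ} (hC : ∀ i j, 0 ≤ C i j)
    (hdet : IsUnit (1 - C).det) (hlim : Tendsto (C ^ ·) atTop (𝓝 0)) (i j : m) :
    0 ≤ (1 - C)⁻¹ i j := by
  have hsum (k : ℕ) : ∑ l ∈ Finset.range k, C ^ l = (1 - C)⁻¹ * (1 - C ^ k) := by
    rw [← mul_neg_geom_sum, nonsing_inv_mul_cancel_left _ _ hdet]
  have hlim' : Tendsto (fun k => ∑ l ∈ Finset.range k, C ^ l) atTop (𝓝 (1 - C)⁻¹) := by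
    simpa [hsum] using (tendsto_const_nhds (x := (1 - C)⁻¹)).mul
      ((tendsto_const_nhds (x := 1)).sub hlim)
  refine ge_of_tendsto' ((continuous_id.matrix_elem i j).tendsto _ |>.comp hlim') fun k => ?_
  show 0 ≤ (∑ l ∈ Finset.range k, C ^ l) i j
  rw [sum_apply]
  exact Finset.sum_nonneg fun l _ => pow_apply_nonneg hC l i j

theorem mulVec_apply_eq_dotProduct_castSucc_add {R ι : Type*} [NonUnitalNonAssocSemiring R]
    {k : ℕ} (M : Matrix ι (Fin (k + 1)) R) (x : Fin (k + 1) → R) (r : ι) :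
    (M *ᵥ x) r = (fun j : Fin k => M r j.castSucc) ⬝ᵥ (fun j => x j.castSucc) +
      M r (Fin.last k) * x (Fin.last k) := by
  simp [mulVec, dotProduct, Fin.sum_univ_castSucc]

end Matrix

theorem Metzler.transpose {m : Type*} [Fintype m] {M : Matrix m m ℝ} (hM : Metzler M) :
    Metzler Mᵀ :=
  fun i j hij => hM j i hij.symm

theorem Metzler.submatrix {m ι : Type*} [Fintype m] [Fintype ι] {M : Matrix m m ℝ}
    (hM : Metzler M) {f : ι → m} (hf : Function.Injective f) : Metzler (M.submatrix f f) :=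
  fun i j hij => hM (f i) (f j) (hf.ne hij)

section

variable {m : Type*} [Fintype m] [DecidableEq m]

theorem HurwitzStable.isUnit_det {A : Matrix m m ℝ} (hA : HurwitzStable A) :
    IsUnit A.det := by
  have h0 : (0 : ℂ) ∉ spectrum ℂ (A.map Complex.ofReal) := fun h => by simpa using hA 0 h
  have hdet : (A.map Complex.ofReal).det = (A.det : ℂ) :=
    (RingHom.map_det Complex.ofRealHom A).symm
  rw [spectrum.zero_mem_iff, not_not, isUnit_iff_isUnit_det, hdet] at h0
  simpa using h0

theorem Metzler.inv_apply_nonpos_of_hurwitzStable {A : Matrix m m ℝ} (hM : Metzler A)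
    (hH : HurwitzStable A) (i j : m) : A⁻¹ i j ≤ 0 := by
  obtain ⟨α, hα, hdiag, hspec⟩ : ∃ α : ℝ, 0 < α ∧ (∀ i, -α ≤ A i i) ∧
      ∀ z ∈ spectrum ℂ (A.map Complex.ofReal), ‖(α : ℂ) + z‖ < α :=
    ((eventually_gt_atTop 0).and ((eventually_all.2 fun i => eventually_ge_atTop (-A i i)).and
      ((finite_spectrum _).eventually_all.2 fun z hz =>
        Complex.eventually_norm_ofReal_add_lt (hH z hz)))).exists.imp
      fun α ⟨h0, hd, hs⟩ => ⟨h0, fun i => by linarith [hd i], hs⟩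
  set C : Matrix m m ℝ := 1 + α⁻¹ • A
  have hC : ∀ i j, 0 ≤ C i j := by
    intro i j
    rcases eq_or_ne i j with rfl | hij
    · have h := mul_nonneg (inv_nonneg.2 hα.le) (neg_le_iff_add_nonneg'.1 (hdiag i))
      simpa [C, mul_add, hα.ne'] using h
    · simpa [C, one_apply_ne hij] using mul_nonneg (inv_nonneg.2 hα.le) (hM i j hij)
  have hspecC : ∀ μ ∈ spectrum ℂ (C.map Complex.ofReal), ‖μ‖ < 1 := by
    intro μ hμ
    have hCmap : C.map Complex.ofReal = 1 + (α⁻¹ : ℂ) • A.map Complex.ofReal := by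
      ext i j; by_cases hij : i = j <;> simp [C, hij]
    rw [hCmap] at hμ
    obtain ⟨z, hz, rfl⟩ := spectrum.exists_eq_one_add_mul_of_mem_one_add_smul
      (by exact_mod_cast (inv_pos.2 hα).ne') hμ
    have hscale : (1 : ℂ) + (α : ℂ)⁻¹ * z = (α : ℂ)⁻¹ * (α + z) := by
      rw [mul_add, inv_mul_cancel₀ (by exact_mod_cast hα.ne')]
    rw [hscale, norm_mul, norm_inv, Complex.norm_real, Real.norm_of_nonneg hα.le,
      inv_mul_lt_one₀ hα]
    exact hspec z hz
  have hright : (1 - C) * ((-α) • A⁻¹) = 1 := by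
    rw [show 1 - C = (-α⁻¹) • A by simp [C], smul_mul_smul_comm,
      mul_nonsing_inv _ hH.isUnit_det, neg_mul_neg, inv_mul_cancel₀ hα.ne', one_smul]
  have key := inv_one_sub_apply_nonneg hC (isUnit_det_of_right_inverse hright)
    (tendsto_pow_atTop_nhds_zero_of_norm_spectrum_lt_one hspecC) i j
  rw [inv_eq_right_inv hright, Matrix.smul_apply, smul_eq_mul] at key
  nlinarith

theorem Metzler.inv_apply_last_nonneg {k : ℕ} {M : Matrix (Fin (k + 1)) (Fin (k + 1)) ℝ}
    (hM : Metzler M) (hdet : IsUnit M.det)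
    (hA : IsUnit (M.submatrix Fin.castSucc Fin.castSucc).det)
    (hAinv : ∀ i j, (M.submatrix Fin.castSucc Fin.castSucc)⁻¹ i j ≤ 0)
    (hlast : 0 < M (Fin.last k) (Fin.last k)) :
    0 < M⁻¹ (Fin.last k) (Fin.last k) ∧
      ∀ i : Fin k, 0 ≤ M⁻¹ i.castSucc (Fin.last k) := by
  set A := M.submatrix Fin.castSucc Fin.castSucc
  set b : Fin k → ℝ := fun i => M i.castSucc (Fin.last k)
  set c : Fin k → ℝ := fun j => M (Fin.last k) j.castSucc
  set x : Fin (k + 1) → ℝ := fun i => M⁻¹ i (Fin.last k)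
  set y : Fin k → ℝ := fun i => x i.castSucc
  set t := x (Fin.last k)
  set u := A⁻¹ *ᵥ b
  have hx (r : Fin (k + 1)) : (M *ᵥ x) r = (1 : Matrix _ _ ℝ) r (Fin.last k) := by
    rw [← mul_nonsing_inv M hdet]; rfl
  have hAy : A *ᵥ y = -(t • b) := by
    ext i
    have := hx i.castSucc
    rw [mulVec_apply_eq_dotProduct_castSucc_add, one_apply_ne (Fin.castSucc_lt_last i).ne] at this
    simp only [Pi.neg_apply, Pi.smul_apply, smul_eq_mul]
    change (fun j : Fin k => M i.castSucc j.castSucc) ⬝ᵥ y = _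
    linarith
  have hy : y = -(t • u) := by
    rw [← one_mulVec y, ← nonsing_inv_mul A hA, ← mulVec_mulVec, hAy, mulVec_neg, mulVec_smul]
  have hu (i : Fin k) : u i ≤ 0 := by
    simp only [u, mulVec, dotProduct]
    exact Finset.sum_nonpos fun j _ => mul_nonpos_of_nonpos_of_nonneg (hAinv i j)
      (hM _ _ (Fin.castSucc_lt_last j).ne)
  have hcu : c ⬝ᵥ u ≤ 0 := by
    simp only [dotProduct]
    exact Finset.sum_nonpos fun j _ => mul_nonpos_of_nonneg_of_nonpos
      (hM _ _ (Fin.castSucc_lt_last j).ne') (hu j)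
  have hts : t * (M (Fin.last k) (Fin.last k) - c ⬝ᵥ u) = 1 := by
    have := hx (Fin.last k)
    rw [mulVec_apply_eq_dotProduct_castSucc_add, one_apply_eq] at this
    change c ⬝ᵥ y + _ = 1 at this
    rw [hy, dotProduct_neg, dotProduct_smul, smul_eq_mul] at this
    linarith
  have hschur : 0 < M (Fin.last k) (Fin.last k) - c ⬝ᵥ u := by linarith
  have ht : 0 < t := pos_of_mul_pos_left (hts ▸ one_pos) hschur.le
  refine ⟨ht, fun i => ?_⟩
  change 0 ≤ y i
  rw [hy]
  simpa using mul_nonpos_of_nonneg_of_nonpos ht.le (hu i)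

end

/-- Lemma 3 of the paper: sign pattern of the inverse of a Metzler, invertible,
output unstable matrix, and the resulting signs of the gains g₀ and g_n. -/
theorem stmt13 (n : ℕ) (M : Matrix (Fin (n+2)) (Fin (n+2)) ℝ)
    (hMetz : Metzler M) (hInv : IsUnit M.det)
    (h11 : HurwitzStable (M.submatrix Fin.castSucc Fin.castSucc))
    (hnn : 0 < M (Fin.last (n+1)) (Fin.last (n+1))) :
    (∀ i : Fin (n+1),
      0 ≤ M⁻¹ (Fin.castSucc i) (Fin.last (n+1)) ∧
      0 ≤ M⁻¹ (Fin.last (n+1)) (Fin.castSucc i)) ∧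
    0 < M⁻¹ (Fin.last (n+1)) (Fin.last (n+1)) ∧
    ∀ b₀ : Fin (n+2) → ℝ, (∀ i, 0 ≤ b₀ i) →
      -((M⁻¹ *ᵥ b₀) (Fin.last (n+1))) ≤ 0 ∧
      -(M⁻¹ (Fin.last (n+1)) (Fin.last (n+1))) < 0 := by
  have hA := h11.isUnit_det
  have hAinv := (hMetz.submatrix (Fin.castSucc_injective _)).inv_apply_nonpos_of_hurwitzStable h11
  obtain ⟨hpos, hcol⟩ := hMetz.inv_apply_last_nonneg hInv hA hAinv hnn
  obtain ⟨-, hrowT⟩ := hMetz.transpose.inv_apply_last_nonneg (by rwa [det_transpose])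
    (by rwa [← transpose_submatrix, det_transpose])
    (by simpa [← transpose_submatrix, ← transpose_nonsing_inv] using fun i j => hAinv j i) hnn
  simp only [← transpose_nonsing_inv, transpose_apply] at hrowT
  have hrow : ∀ j, 0 ≤ M⁻¹ (Fin.last (n+1)) j :=
    Fin.lastCases hpos.le hrowT
  refine ⟨fun i => ⟨hcol i, hrowT i⟩, hpos, fun b₀ hb₀ => ⟨?_, neg_neg_of_pos hpos⟩⟩
  exact neg_nonpos.2 (dotProduct_nonneg_of_nonneg hrow hb₀)
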